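/- arXiv:1004.2253 — 2 statements merged into one kernel-verified Lean document; each statement's English description precedes it below -/
import Mathlib

section
/- Let V be a finite-dimensional vector space over a field k and d : V → V a linear map with d ∘ d = 0. Then there exists a linear map h : V → V such that h ∘ h = 0, d ∘ h ∘ d = d, and h ∘ d ∘ h = h. -/
/-!
Since `d ∘ d = 0`, the range of `d` lies in its kernel. Choose a complement `C` of `ker d`, so that
`d` maps `C` isomorphically onto `range d`, and then a complement `D` of `range d` containing `C`
(possible because `range d ≤ ker d`). Let `h` invert `d : C ≃ range d` on `range d` and vanish
on `D`; this is a generalized inverse of `d`, and `h ∘ h = 0` because `range h ⊆ C ⊆ D ⊆ ker h`.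
-/

theorem IsCompl.exists_isCompl_ge_of_le {α : Type*} [Lattice α] [BoundedOrder α]
    [IsModularLattice α] [ComplementedLattice α] {a b c : α} (hbc : IsCompl b c) (hab : a ≤ b) :
    ∃ d, IsCompl a d ∧ c ≤ d := by
  obtain ⟨e, hae⟩ := exists_isCompl a
  -- by modularity `e ⊓ b` is a complement of `a` within `b`
  refine ⟨e ⊓ b ⊔ c, ⟨?_, ?_⟩, le_sup_right⟩
  · have hb : b ⊓ (e ⊓ b ⊔ c) = e ⊓ b := by
      rw [inf_comm, sup_inf_assoc_of_le c inf_le_right, hbc.symm.inf_eq_bot, sup_bot_eq]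
    rw [disjoint_iff]
    calc a ⊓ (e ⊓ b ⊔ c) = a ⊓ b ⊓ (e ⊓ b ⊔ c) := by rw [inf_eq_left.mpr hab]
      _ = a ⊓ e ⊓ b := by rw [inf_assoc, hb, inf_assoc]
      _ = ⊥ := by rw [hae.inf_eq_bot, bot_inf_eq]
  · have hb : a ⊔ e ⊓ b = b := by
      rw [← sup_inf_assoc_of_le e hab, hae.sup_eq_top, top_inf_eq]
    rw [codisjoint_iff, ← sup_assoc, hb, hbc.sup_eq_top]

namespace LinearMap

variable {K V W : Type*} [DivisionRing K] [AddCommGroup V] [Module K V] [AddCommGroup W]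
  [Module K W] (f : V →ₗ[K] W) {C : Submodule K V} {D : Submodule K W}

noncomputable def generalizedInverse (hC : IsCompl C (ker f)) (hD : IsCompl (range f) D) :
    W →ₗ[K] V :=
  C.subtype ∘ₗ (f.kerComplementEquivRange hC).symm.toLinearMap ∘ₗ (range f).projectionOnto D hD

variable (hC : IsCompl C (ker f)) (hD : IsCompl (range f) D)

theorem generalizedInverse_apply_mem (y : W) : f.generalizedInverse hC hD y ∈ C :=
  Subtype.prop _

theorem generalizedInverse_apply_of_mem {y : W} (hy : y ∈ D) :
    f.generalizedInverse hC hD y = 0 := by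
  simp only [generalizedInverse, comp_apply, Submodule.projectionOnto_apply_of_mem_right hD hy,
    map_zero]

theorem apply_generalizedInverse_apply (y : W) :
    f (f.generalizedInverse hC hD y) = (range f).projectionOnto D hD y := by
  rw [generalizedInverse, comp_apply, comp_apply, Submodule.subtype_apply, LinearEquiv.coe_coe,
    ← kerComplementEquivRange_apply_coe f hC, LinearEquiv.apply_symm_apply]

theorem comp_generalizedInverse_comp : f ∘ₗ f.generalizedInverse hC hD ∘ₗ f = f := by
  ext x
  rw [comp_apply, comp_apply, apply_generalizedInverse_apply,
    Submodule.projectionOnto_apply_of_mem_left hD (mem_range_self f x)]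

theorem generalizedInverse_comp_comp :
    f.generalizedInverse hC hD ∘ₗ f ∘ₗ f.generalizedInverse hC hD = f.generalizedInverse hC hD := by
  ext y
  rw [comp_apply, comp_apply, apply_generalizedInverse_apply]
  simp only [generalizedInverse, comp_apply, Submodule.projectionOnto_apply_left]

end LinearMap

theorem exists_homotopy_general (k V : Type*) [Field k] [AddCommGroup V] [Module k V]
    (d : V →ₗ[k] V) (hd : d ∘ₗ d = 0) :
    ∃ h : V →ₗ[k] V, h ∘ₗ h = 0 ∧ d ∘ₗ h ∘ₗ d = d ∧ h ∘ₗ d ∘ₗ h = h := by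
  have hrange : LinearMap.range d ≤ LinearMap.ker d := LinearMap.range_le_ker_iff.mpr hd
  obtain ⟨C, hC⟩ := Submodule.exists_isCompl (LinearMap.ker d)
  obtain ⟨D, hD, hCD⟩ := hC.exists_isCompl_ge_of_le hrange
  refine ⟨d.generalizedInverse hC.symm hD, ?_, d.comp_generalizedInverse_comp _ _,
    d.generalizedInverse_comp_comp _ _⟩
  ext v
  exact d.generalizedInverse_apply_of_mem _ _ (hCD (d.generalizedInverse_apply_mem _ _ v))

/-- For a finite-dimensional vector space `V` over a field `k`
and a linear map `d : V → V` with `d ∘ d = 0`, there exists a linear map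
`h : V → V` with `h ∘ h = 0`, `d ∘ h ∘ d = d` and `h ∘ d ∘ h = h`. -/
theorem exists_homotopy (k V : Type*) [Field k] [AddCommGroup V] [Module k V]
    [FiniteDimensional k V] (d : V →ₗ[k] V) (hd : d ∘ₗ d = 0) :
    ∃ h : V →ₗ[k] V, h ∘ₗ h = 0 ∧ d ∘ₗ h ∘ₗ d = d ∧ h ∘ₗ d ∘ₗ h = h :=
  exists_homotopy_general k V d hd
end

section
/- Let V be a finite-dimensional vector space over a field k of characteristic ≠ 2, and let I : V → V be a linear map such that ker(I∘I) ∩ range(I∘I) = {0}. Then there exists a linear map H : V → V such that H ∘ (I∘I) = (I∘I) ∘ H and the map P := id − (I∘H + H∘I) is idempotent (P ∘ P = P) with range(P) ⊆ ker(I∘I). -/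
/-! For `A = I ∘ I` the hypothesis splits `V = ker A ⊕ range A`; let `p` be the projection onto
`range A` along `ker A`. Then `u = A + 1 - p` is invertible (it is `A` on `range A` and the
identity on `ker A`), commutes with everything that commutes with `A`, and `u⁻¹ A = p`. Hence
`H = ½ u⁻¹ I` commutes with `A` and `I H + H I = u⁻¹ A = p`, so `id - (I H + H I) = 1 - p` is
the projection onto `ker A`. -/

open LinearMap Module

lemma LinearMap.isCompl_ker_range_of_disjoint {K V : Type*} [DivisionRing K] [AddCommGroup V]
    [Module K V] [FiniteDimensional K V] {A : End K V} (h : Disjoint (ker A) (range A)) :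
    IsCompl (ker A) (range A) :=
  (Submodule.isCompl_iff_disjoint _ _ (by rw [add_comm, A.finrank_range_add_finrank_ker])).mpr h

namespace Module.End

section Ring

variable {R M : Type*} [Ring R] [AddCommGroup M] [Module R M] {A T p : End R M}

lemma ker_mem_invtSubmodule_of_commute (h : Commute T A) : ker A ∈ invtSubmodule T :=
  (mem_invtSubmodule_iff_forall_mem_of_mem T).mpr fun x hx => by
    rw [mem_ker] at hx ⊢
    rw [← mul_apply, ← h.eq, mul_apply, hx, map_zero]

lemma range_mem_invtSubmodule_of_commute (h : Commute T A) : range A ∈ invtSubmodule T := by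
  refine (mem_invtSubmodule_iff_forall_mem_of_mem T).mpr ?_
  rintro _ ⟨y, rfl⟩
  exact ⟨T y, by rw [← mul_apply, ← h.eq, mul_apply]⟩

lemma add_one_sub_mul_eq (hp : IsIdempotentElem p) (hker : ker p = ker A) :
    (A + 1 - p) * p = A := by
  have hAp : A * p = A := (hp.comp_eq_left_iff A).mpr hker.le
  rw [sub_mul, add_mul, hAp, one_mul, hp.eq, add_sub_cancel_right]

lemma commute_add_one_sub (hp : IsIdempotentElem p) (hrange : range p = range A)
    (hker : ker p = ker A) (h : Commute T A) : Commute T (A + 1 - p) := by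
  have hpT : Commute p T := hp.commute_iff.mpr
    ⟨hrange ▸ range_mem_invtSubmodule_of_commute h, hker ▸ ker_mem_invtSubmodule_of_commute h⟩
  exact (h.add_right (Commute.one_right T)).sub_right hpT.symm

end Ring

lemma isUnit_add_one_sub {K V : Type*} [DivisionRing K] [AddCommGroup V] [Module K V]
    [FiniteDimensional K V] {A p : End K V} (hp : IsIdempotentElem p)
    (hrange : range p = range A) (hker : ker p = ker A) : IsUnit (A + 1 - p) := by
  have hpA : p * A = A := (hp.comp_eq_right_iff A).mpr hrange.ge
  have hpu : p * (A + 1 - p) = A := by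
    rw [mul_sub, mul_add, hpA, mul_one, hp.eq, add_sub_cancel_right]
  refine (isUnit_iff_ker_eq_bot _).mpr (eq_bot_iff.mpr fun x hx => ?_)
  have hAx : A x = 0 := by rw [← hpu, mul_apply, mem_ker.mp hx, map_zero]
  have hpx : p x = 0 := by rw [← mem_ker, hker, mem_ker, hAx]
  simpa [hpx, hAx] using mem_ker.mp hx

end Module.End

/-- Let `V` be a finite-dimensional vector space over a field
`k` of characteristic `≠ 2`, and `I : V → V` a linear map with
`ker(I∘I) ∩ range(I∘I) = {0}`. Then there is a linear map `H : V → V` commuting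
with `I∘I` such that `P := id − (I∘H + H∘I)` is idempotent with
`range P ⊆ ker(I∘I)`. -/
theorem exists_equivariant_homotopy (k V : Type*) [Field k] [AddCommGroup V]
    [Module k V] [FiniteDimensional k V] (hchar : (2 : k) ≠ 0)
    (I : V →ₗ[k] V)
    (hker : LinearMap.ker (I ∘ₗ I) ⊓ LinearMap.range (I ∘ₗ I) = ⊥) :
    ∃ H : V →ₗ[k] V,
      H ∘ₗ (I ∘ₗ I) = (I ∘ₗ I) ∘ₗ H ∧
      (LinearMap.id - (I ∘ₗ H + H ∘ₗ I)) ∘ₗ (LinearMap.id - (I ∘ₗ H + H ∘ₗ I))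
        = LinearMap.id - (I ∘ₗ H + H ∘ₗ I) ∧
      LinearMap.range (LinearMap.id - (I ∘ₗ H + H ∘ₗ I))
        ≤ LinearMap.ker (I ∘ₗ I) := by
  simp only [← End.mul_eq_comp, ← End.one_eq_id] at hker ⊢
  set A := I * I
  have hc := (isCompl_ker_range_of_disjoint (disjoint_iff.mpr hker)).symm
  set p := (range A).projection (ker A) hc
  have hp : IsIdempotentElem p := Submodule.isIdempotentElem_projection hc
  have hrange : range p = range A := Submodule.range_projection hc
  have hkerp : ker p = ker A := Submodule.ker_projection hc
  set u := (End.isUnit_add_one_sub hp hrange hkerp).unit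
  have hp_eq : p = ↑u⁻¹ * A :=
    (Units.eq_inv_mul_iff_mul_eq u).mpr (End.add_one_sub_mul_eq hp hkerp)
  have hIA : Commute I A := (Commute.refl I).mul_right (Commute.refl I)
  have hIu : Commute I ↑u⁻¹ := (End.commute_add_one_sub hp hrange hkerp hIA).units_inv_right
  have hAu : Commute A ↑u⁻¹ := hIu.mul_left hIu
  set H := (2⁻¹ : k) • (↑u⁻¹ * I)
  have hanti : I * H + H * I = p := calc
    I * H + H * I = (2⁻¹ : k) • (↑u⁻¹ * A + ↑u⁻¹ * A) := by
      rw [mul_smul_comm, smul_mul_assoc, ← smul_add, ← mul_assoc, hIu.eq, mul_assoc]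
    _ = p := by rw [← two_smul k, smul_smul, inv_mul_cancel₀ hchar, one_smul, hp_eq]
  refine ⟨H, ((hAu.mul_right hIA.symm).smul_right (2⁻¹ : k)).symm.eq, ?_, ?_⟩ <;> rw [hanti]
  · exact hp.one_sub.eq
  · rw [← hp.ker_eq_range_one_sub, hkerp]
end
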